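/- If g ∈ Isom(V) satisfies (♭f₀)(i(g, id_V)) ≠ 0 (i.e., the function l ↦ (♭f₀)(i(g, id_V))(l) on L_Q is not identically zero), then g ∈ P. -/

import Mathlib

open scoped TensorProduct

noncomputable section

namespace Dbl

variable {E : Type*} [Field E]

/-- Axioms for an ε-sesquilinear form with respect to the involution `σ` and sign `ε`. -/
structure IsSesq (σ : E →+* E) (ε : E) {V : Type*} [AddCommGroup V] [Module E V]
    (B : V → V → E) : Prop where
  add_left : ∀ x₁ x₂ y : V, B (x₁ + x₂) y = B x₁ y + B x₂ y
  smul_left : ∀ (t : E) (x y : V), B (t • x) y = t * B x y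
  conj_symm : ∀ x y : V, B y x = ε * σ (B x y)

/-- Nondegeneracy of a pairing. -/
def Nondeg {V : Type*} [AddCommGroup V] [Module E V] (B : V → V → E) : Prop :=
  ∀ x : V, (∀ y : V, B x y = 0) → x = 0

/-- A submodule is totally isotropic for `B`. -/
def TotIso {V : Type*} [AddCommGroup V] [Module E V] (B : V → V → E)
    (U : Submodule E V) : Prop :=
  ∀ x ∈ U, ∀ y ∈ U, B x y = 0

/-- The doubled form on `V × V`. -/
def dblForm {V : Type*} [AddCommGroup V] [Module E V] (B : V → V → E) :
    V × V → V × V → E :=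
  fun x y => B x.1 y.1 - B x.2 y.2

/-- The diagonal `V^Δ = {(v,v)}` of the doubling space. -/
def diagSub (E : Type*) [Field E] (V : Type*) [AddCommGroup V] [Module E V] :
    Submodule E (V × V) where
  carrier := {p | p.1 = p.2}
  add_mem' := by
    intro a b ha hb
    simp only [Set.mem_setOf_eq, Prod.fst_add, Prod.snd_add] at *
    rw [ha, hb]
  zero_mem' := rfl
  smul_mem' := by
    intro c p hp
    simp only [Set.mem_setOf_eq, Prod.smul_fst, Prod.smul_snd] at *
    rw [hp]

/-- The antidiagonal `V^∇ = {(v,-v)}` of the doubling space. -/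
def antidiagSub (E : Type*) [Field E] (V : Type*) [AddCommGroup V] [Module E V] :
    Submodule E (V × V) where
  carrier := {p | p.2 = -p.1}
  add_mem' := by
    intro a b ha hb
    simp only [Set.mem_setOf_eq, Prod.fst_add, Prod.snd_add] at *
    rw [ha, hb, neg_add]
  zero_mem' := by simp
  smul_mem' := by
    intro c p hp
    simp only [Set.mem_setOf_eq, Prod.smul_fst, Prod.smul_snd] at *
    rw [hp, smul_neg]

/-- The isometry group of a pairing, as a subgroup of the group of linear
automorphisms. -/
def IsomGrp {V : Type*} [AddCommGroup V] [Module E V] (B : V → V → E) :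
    Subgroup (V ≃ₗ[E] V) where
  carrier := {g | ∀ x y : V, B (g x) (g y) = B x y}
  one_mem' := fun _ _ => rfl
  mul_mem' := by
    intro a b ha hb x y
    exact (ha (b x) (b y)).trans (hb x y)
  inv_mem' := by
    intro a ha x y
    have h := ha (a.symm x) (a.symm y)
    rw [a.apply_symm_apply, a.apply_symm_apply] at h
    exact h.symm


lemma mem_isom_iff {V : Type*} [AddCommGroup V] [Module E V] {B : V → V → E}
    {g : V ≃ₗ[E] V} : g ∈ IsomGrp B ↔ ∀ x y : V, B (g x) (g y) = B x y := Iff.rfl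

variable {V : Type*} [AddCommGroup V] [Module E V]


/-- The product of two isometries is an isometry of the doubled form. -/
theorem prod_mem_isom {B : V → V → E} {g₁ g₂ : V ≃ₗ[E] V}
    (h₁ : g₁ ∈ IsomGrp B) (h₂ : g₂ ∈ IsomGrp B) :
    g₁.prodCongr g₂ ∈ IsomGrp (dblForm B) := by
  rw [mem_isom_iff] at *
  intro x y
  show B (g₁ x.1) (g₁ y.1) - B (g₂ x.2) (g₂ y.2) = _
  rw [h₁ x.1 y.1, h₂ x.2 y.2]
  rfl

/-- The doubling embedding `i : Isom(V) × Isom(V) →* Isom(V□)`. -/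
def iHom (B : V → V → E) : ↥(IsomGrp B) × ↥(IsomGrp B) →* ↥(IsomGrp (dblForm B)) where
  toFun p := ⟨(p.1 : V ≃ₗ[E] V).prodCongr (p.2 : V ≃ₗ[E] V), prod_mem_isom p.1.2 p.2.2⟩
  map_one' := by
    apply Subtype.ext
    apply LinearEquiv.ext
    intro x
    rfl
  map_mul' := by
    intro p q
    apply Subtype.ext
    apply LinearEquiv.ext
    intro x
    rfl

/-- The stabilizer (as a subgroup of the linear automorphism group) of a submodule. -/
def stab {W : Type*} [AddCommGroup W] [Module E W] (U : Submodule E W) :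
    Subgroup (W ≃ₗ[E] W) where
  carrier := {g | ∀ x : W, x ∈ U ↔ g x ∈ U}
  one_mem' := fun _ => Iff.rfl
  mul_mem' := by
    intro a b ha hb x
    exact (hb x).trans (ha (b x))
  inv_mem' := by
    intro a ha x
    have h := ha (a.symm x)
    rw [a.apply_symm_apply] at h
    exact h.symm

lemma mem_stab_iff {W : Type*} [AddCommGroup W] [Module E W] {U : Submodule E W}
    {g : W ≃ₗ[E] W} : g ∈ stab U ↔ ∀ x : W, x ∈ U ↔ g x ∈ U := Iff.rfl

/-- Restriction of an automorphism preserving `U` to an automorphism of `U`. -/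
def resEquiv {W : Type*} [AddCommGroup W] [Module E W] (U : Submodule E W)
    (e : W ≃ₗ[E] W) (he : ∀ x : W, x ∈ U ↔ e x ∈ U) : ↥U ≃ₗ[E] ↥U where
  toFun u := ⟨e u, (he u).1 u.2⟩
  invFun u := ⟨e.symm u, by
    have h := he (e.symm (u : W))
    rw [e.apply_symm_apply] at h
    exact h.2 u.2⟩
  left_inv := fun u => Subtype.ext (by simp)
  right_inv := fun u => Subtype.ext (by simp)
  map_add' := fun a b => Subtype.ext (by simp)
  map_smul' := fun c a => Subtype.ext (by simp)

/-- Restriction, as a group homomorphism. -/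
def resMonoidHom {W : Type*} [AddCommGroup W] [Module E W] {G : Type*} [Group G]
    (φ : G →* (W ≃ₗ[E] W)) (U : Submodule E W)
    (h : ∀ (g : G) (x : W), x ∈ U ↔ φ g x ∈ U) : G →* (↥U ≃ₗ[E] ↥U) where
  toFun g := resEquiv U (φ g) (h g)
  map_one' := by
    apply LinearEquiv.ext
    intro u
    apply Subtype.ext
    show φ 1 (u : W) = _
    rw [map_one]
    rfl
  map_mul' := by
    intro a b
    apply LinearEquiv.ext
    intro u
    apply Subtype.ext
    show φ (a * b) (u : W) = _
    rw [map_mul]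
    rfl

lemma resMonoidHom_apply_coe {W : Type*} [AddCommGroup W] [Module E W] {G : Type*}
    [Group G] (φ : G →* (W ≃ₗ[E] W)) (U : Submodule E W)
    (h : ∀ (g : G) (x : W), x ∈ U ↔ φ g x ∈ U) (g : G) (x : ↥U) :
    ((resMonoidHom φ U h g) x : W) = φ g (x : W) := rfl

/-- The "unipotent radical" subgroup attached to a chain of submodules. -/
def unipOf {W : Type*} [AddCommGroup W] [Module E W] (F : ℕ → Submodule E W)
    (hmono : Monotone F) (htop : ∃ N, F N = ⊤) : Subgroup (W ≃ₗ[E] W) where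
  carrier := {g | ∀ n, ∀ v ∈ F (n + 1), g v - v ∈ F n}
  one_mem' := by
    intro n v _
    simp
  mul_mem' := by
    intro a b ha hb n v hv
    have hbv : b v ∈ F (n + 1) :=
      by simpa using add_mem hv (hmono (Nat.le_succ n) (hb n v hv))
    have h1 : a (b v) - b v ∈ F n := ha n (b v) hbv
    have : (a * b) v - v = (a (b v) - b v) + (b v - v) := by
      show a (b v) - v = _
      abel
    rw [this]
    exact add_mem h1 (hb n v hv)
  inv_mem' := by
    intro a ha n v hv
    set w := a⁻¹ v with hwdef
    have hva : a w = v := a.apply_symm_apply v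
    have key : ∀ j, w ∈ F (n + 1 + j) → w ∈ F (n + 1) := by
      intro j
      induction j with
      | zero => intro h; simpa using h
      | succ j ih =>
        intro hwj
        have h1 : a w - w ∈ F (n + 1 + j) := ha (n + 1 + j) w (by
          have : n + 1 + j + 1 = n + 1 + (j + 1) := by omega
          rw [this]; exact hwj)
        have h2 : w = v - (a w - w) := by rw [hva]; abel
        have : w ∈ F (n + 1 + j) := by
          rw [h2]
          exact sub_mem (hmono (by omega) hv) h1
        exact ih this
    obtain ⟨N, hN⟩ := htop
    have hw1 : w ∈ F (n + 1) := by
      apply key N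
      have hwN : w ∈ F N := by rw [hN]; trivial
      exact hmono (by omega) hwN
    have h3 := ha n w hw1
    have h4 : a⁻¹ v - v = -(a w - w) := by rw [hva]; abel
    rw [h4]
    exact neg_mem h3


variable {k : Type*} [Field k]

/-- The right-translation representation on a right-translation invariant
submodule of functions `G → W`. -/
def rtRep {G : Type*} [Group G] {W : Type*} [AddCommMonoid W] [Module k W]
    (C : Submodule k (G → W))
    (hC : ∀ (x : G), ∀ f ∈ C, (fun g => f (g * x)) ∈ C) :
    Representation k G ↥C where
  toFun x :=
    { toFun := fun f => ⟨fun g => (f : G → W) (g * x), hC x f f.2⟩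
      map_add' := by intro f f'; apply Subtype.ext; funext g; rfl
      map_smul' := by intro c f; apply Subtype.ext; funext g; rfl }
  map_one' := by
    apply LinearMap.ext
    intro f
    apply Subtype.ext
    funext g
    simp
  map_mul' := by
    intro x y
    apply LinearMap.ext
    intro f
    apply Subtype.ext
    funext g
    show (f : G → W) (g * (x * y)) = (f : G → W) (g * x * y)
    rw [mul_assoc]

/-- The space of `G`-equivariant `k`-linear maps between two representations. -/
def repHom {G : Type*} [Group G] {W₁ W₂ : Type*} [AddCommMonoid W₁] [Module k W₁]
    [AddCommMonoid W₂] [Module k W₂]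
    (ρ : Representation k G W₁) (τ : Representation k G W₂) :
    Submodule k (W₁ →ₗ[k] W₂) where
  carrier := {T | ∀ g : G, T ∘ₗ ρ g = τ g ∘ₗ T}
  zero_mem' := by intro g; simp
  add_mem' := by
    intro T S hT hS g
    simp only [LinearMap.add_comp, LinearMap.comp_add, hT g, hS g]
  smul_mem' := by
    intro c T hT g
    simp only [LinearMap.smul_comp, LinearMap.comp_smul, hT g]

/-- Irreducibility of a representation. -/
def RepIrred {G : Type*} [Group G] {W : Type*} [AddCommMonoid W] [Module k W]
    (ρ : Representation k G W) : Prop :=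
  Nontrivial W ∧
    ∀ U : Submodule k W, (∀ (g : G), ∀ w ∈ U, ρ g w ∈ U) → U = ⊥ ∨ U = ⊤

/-- `π` is (isomorphic to) a subrepresentation of `ρ`. -/
def IsSubrep {G : Type*} [Group G] {W₁ W₂ : Type*} [AddCommMonoid W₁] [Module k W₁]
    [AddCommMonoid W₂] [Module k W₂]
    (π : Representation k G W₁) (ρ : Representation k G W₂) : Prop :=
  ∃ ι : W₁ →ₗ[k] W₂, Function.Injective ι ∧ ∀ g : G, ι ∘ₗ π g = ρ g ∘ₗ ι

/-- The carrier of the (parabolically) induced representation: functions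
`f : G → W` with `f (u * l * g) = σ l (f g)` for `u` in the unipotent radical
`N` and `l` in the Levi subgroup `L`. -/
def indCarrier {G : Type*} [Group G] (N L : Subgroup G) {W : Type*}
    [AddCommMonoid W] [Module k W] (σL : Representation k ↥L W) :
    Submodule k (G → W) where
  carrier := {f | ∀ u ∈ N, ∀ (l : ↥L) (g : G), f (u * ↑l * g) = σL l (f g)}
  zero_mem' := by intro u hu l g; simp
  add_mem' := by
    intro f f' hf hf' u hu l g
    simp only [Pi.add_apply, hf u hu l g, hf' u hu l g, map_add]
  smul_mem' := by
    intro c f hf u hu l g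
    simp only [Pi.smul_apply, hf u hu l g, map_smul]

theorem indCarrier_rt {G : Type*} [Group G] (N L : Subgroup G) {W : Type*}
    [AddCommMonoid W] [Module k W] (σL : Representation k ↥L W) :
    ∀ (x : G), ∀ f ∈ indCarrier N L σL, (fun g => f (g * x)) ∈ indCarrier N L σL := by
  intro x f hf u hu l g
  have := hf u hu l (g * x)
  simpa [mul_assoc] using this

/-- The induced representation. -/
def indRep {G : Type*} [Group G] (N L : Subgroup G) {W : Type*}
    [AddCommMonoid W] [Module k W] (σL : Representation k ↥L W) :
    Representation k G ↥(indCarrier N L σL) :=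
  rtRep (indCarrier N L σL) (indCarrier_rt N L σL)


variable {W : Type*} [AddCommGroup W] [Module E W]

/-- The determinant of the restriction of `e` to the invariant submodule `U`. -/
def detRes (U : Submodule E W) (e : W ≃ₗ[E] W)
    (he : ∀ x : W, x ∈ U ↔ e x ∈ U) : E :=
  LinearMap.det ((resEquiv U e he : ↥U ≃ₗ[E] ↥U) : ↥U →ₗ[E] ↥U)

/-- The determinant of the map induced by `e` on the quotient `W ⧸ U`. -/
def detQuot (U : Submodule E W) (e : W ≃ₗ[E] W)
    (he : ∀ x : W, x ∈ U ↔ e x ∈ U) : E :=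
  LinearMap.det (Submodule.mapQ U U (e : W →ₗ[E] W)
    (fun x hx => Submodule.mem_comap.mpr ((he x).1 hx)))

/-- Degenerate principal series, nondegenerate case: functions `f` on the group `G`
(mapped into the automorphisms of `W` by `φ`) satisfying
`f (p * g) = χ(det (p|Δ)) * f g` for all `p` stabilizing `Δ`. -/
def degPSnd {G : Type*} [Group G] (φ : G →* (W ≃ₗ[E] W)) (Δ : Submodule E W)
    (χ : E →* k) : Submodule k (G → k) where
  carrier := {f | ∀ (p : G) (hp : ∀ x : W, x ∈ Δ ↔ φ p x ∈ Δ) (g : G),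
    f (p * g) = χ (detRes Δ (φ p) hp) * f g}
  zero_mem' := by intro p hp g; simp
  add_mem' := by
    intro f f' hf hf' p hp g
    simp only [Pi.add_apply, hf p hp g, hf' p hp g]
    ring
  smul_mem' := by
    intro c f hf p hp g
    simp only [Pi.smul_apply, hf p hp g, smul_eq_mul]
    ring

/-- Degenerate principal series, identically-zero-form case: the extra factor
`χ^{-c}(det p̄)` appears, where `p̄` is induced on `W ⧸ Δ`. -/
def degPSz (σc : E →+* E) {G : Type*} [Group G] (φ : G →* (W ≃ₗ[E] W))
    (Δ : Submodule E W) (χ : E →* k) : Submodule k (G → k) where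
  carrier := {f | ∀ (p : G) (hp : ∀ x : W, x ∈ Δ ↔ φ p x ∈ Δ) (g : G),
    f (p * g) = χ (detRes Δ (φ p) hp) * (χ (σc (detQuot Δ (φ p) hp)))⁻¹ * f g}
  zero_mem' := by intro p hp g; simp
  add_mem' := by
    intro f f' hf hf' p hp g
    simp only [Pi.add_apply, hf p hp g, hf' p hp g]
    ring
  smul_mem' := by
    intro c f hf p hp g
    simp only [Pi.smul_apply, hf p hp g, smul_eq_mul]
    ring

theorem degPSnd_rt {G : Type*} [Group G] (φ : G →* (W ≃ₗ[E] W)) (Δ : Submodule E W)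
    (χ : E →* k) :
    ∀ (x : G), ∀ f ∈ degPSnd φ Δ χ, (fun g => f (g * x)) ∈ degPSnd φ Δ χ := by
  intro x f hf p hp g
  have := hf p hp (g * x)
  simpa [mul_assoc] using this

theorem degPSz_rt (σc : E →+* E) {G : Type*} [Group G] (φ : G →* (W ≃ₗ[E] W))
    (Δ : Submodule E W) (χ : E →* k) :
    ∀ (x : G), ∀ f ∈ degPSz σc φ Δ χ, (fun g => f (g * x)) ∈ degPSz σc φ Δ χ := by
  intro x f hf p hp g
  have := hf p hp (g * x)
  simpa [mul_assoc] using this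

/-- The right-translation representation on the degenerate principal series
(nondegenerate case). -/
def degPSndRep {G : Type*} [Group G] (φ : G →* (W ≃ₗ[E] W)) (Δ : Submodule E W)
    (χ : E →* k) : Representation k G ↥(degPSnd φ Δ χ) :=
  rtRep (degPSnd φ Δ χ) (degPSnd_rt φ Δ χ)

/-- The right-translation representation on the degenerate principal series
(zero-form case). -/
def degPSzRep (σc : E →+* E) {G : Type*} [Group G] (φ : G →* (W ≃ₗ[E] W))
    (Δ : Submodule E W) (χ : E →* k) : Representation k G ↥(degPSz σc φ Δ χ) :=
  rtRep (degPSz σc φ Δ χ) (degPSz_rt σc φ Δ χ)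

end Dbl
namespace Dbl

variable {E : Type*} [Field E] {k : Type*} [Field k]

/-- The character `χ^{-c} : x ↦ χ(x̄)⁻¹`. -/
noncomputable def chiMC (σ : E →+* E) (χ : E →* k) : E →* k where
  toFun x := (χ (σ x))⁻¹
  map_one' := by simp
  map_mul' := by
    intro a b
    show (χ (σ (a * b)))⁻¹ = (χ (σ a))⁻¹ * (χ (σ b))⁻¹
    rw [map_mul, map_mul, mul_inv]

variable {V : Type*} [AddCommGroup V] [Module E V]

/-- The determinant of a linear automorphism. -/
noncomputable def detE (h : V ≃ₗ[E] V) : E := LinearMap.det (h : V →ₗ[E] V)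

end Dbl
namespace Dbl

variable {E : Type*} [Field E] {V : Type*} [AddCommGroup V] [Module E V]

/-- A three-step flag of submodules, as a chain indexed by `ℕ`. -/
def flag3 (X S : Submodule E V) : ℕ → Submodule E V
  | 0 => ⊥
  | 1 => X
  | 2 => S
  | _ + 3 => ⊤

lemma flag3_mono {X S : Submodule E V} (h : X ≤ S) : Monotone (flag3 X S) := by
  apply monotone_nat_of_le_succ
  intro n
  match n with
  | 0 => exact bot_le
  | 1 => exact h
  | 2 => exact le_top
  | (m + 3) => exact le_rfl

/-- The unipotent subgroup attached to the flag `0 ⊂ X ⊂ S ⊂ V`. -/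
def unipFlag3 (X S : Submodule E V) (h : X ≤ S) : Subgroup (V ≃ₗ[E] V) :=
  unipOf (flag3 X S) (flag3_mono h) ⟨3, rfl⟩

/-- The parabolic subgroup of the isometry group stabilizing the flag `0 ⊂ X ⊂ S ⊂ V`. -/
def parabSub (B : V → V → E) (X S : Submodule E V) : Subgroup ↥(IsomGrp B) :=
  Subgroup.comap (IsomGrp B).subtype (stab X ⊓ stab S)

/-- Its unipotent radical. -/
def unipSub (B : V → V → E) (X S : Submodule E V) (h : X ≤ S) : Subgroup ↥(IsomGrp B) :=
  Subgroup.comap (IsomGrp B).subtype (unipFlag3 X S h)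

/-- The Levi subgroup attached to the decomposition `V = X ⊕ V₀ ⊕ Y`. -/
def leviSub (B : V → V → E) (X V₀ Y : Submodule E V) : Subgroup ↥(IsomGrp B) :=
  Subgroup.comap (IsomGrp B).subtype (stab X ⊓ stab V₀ ⊓ stab Y)

lemma leviSub_stab_fst (B : V → V → E) (X V₀ Y : Submodule E V)
    (l : ↥(leviSub B X V₀ Y)) :
    ∀ x : V, x ∈ X ↔ ((IsomGrp B).subtype.comp (leviSub B X V₀ Y).subtype) l x ∈ X := by
  have h := Subgroup.mem_comap.mp l.2
  exact mem_stab_iff.mp (Subgroup.mem_inf.mp (Subgroup.mem_inf.mp h).1).1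

lemma leviSub_stab_snd (B : V → V → E) (X V₀ Y : Submodule E V)
    (l : ↥(leviSub B X V₀ Y)) :
    ∀ x : V, x ∈ V₀ ↔ ((IsomGrp B).subtype.comp (leviSub B X V₀ Y).subtype) l x ∈ V₀ := by
  have h := Subgroup.mem_comap.mp l.2
  exact mem_stab_iff.mp (Subgroup.mem_inf.mp (Subgroup.mem_inf.mp h).1).2

/-- Restriction of the Levi to its `GL_E(X)`-factor. -/
def resFst (B : V → V → E) (X V₀ Y : Submodule E V) :
    ↥(leviSub B X V₀ Y) →* (↥X ≃ₗ[E] ↥X) :=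
  resMonoidHom ((IsomGrp B).subtype.comp (leviSub B X V₀ Y).subtype) X
    (leviSub_stab_fst B X V₀ Y)

/-- The restricted form on `V₀`. -/
def resForm (B : V → V → E) (V₀ : Submodule E V) : ↥V₀ → ↥V₀ → E :=
  fun a b => B (a : V) (b : V)

/-- Restriction of the Levi to its `Isom(V₀)`-factor. -/
def resSnd (B : V → V → E) (X V₀ Y : Submodule E V) :
    ↥(leviSub B X V₀ Y) →* ↥(IsomGrp (resForm B V₀)) :=
  MonoidHom.codRestrict
    (resMonoidHom ((IsomGrp B).subtype.comp (leviSub B X V₀ Y).subtype) V₀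
      (leviSub_stab_snd B X V₀ Y))
    (IsomGrp (resForm B V₀))
    (by
      intro l
      rw [mem_isom_iff]
      intro x y
      show B _ _ = B (x : V) (y : V)
      rw [resMonoidHom_apply_coe, resMonoidHom_apply_coe]
      have hiso : ((l : ↥(IsomGrp B)) : V ≃ₗ[E] V) ∈ IsomGrp B := (l : ↥(IsomGrp B)).2
      exact (mem_isom_iff.mp hiso) (x : V) (y : V))

end Dbl
namespace Dbl

open Classical

variable {E : Type*} [Field E] {k : Type*} [Field k]
variable {V : Type*} [AddCommGroup V] [Module E V]

/-- The special section of a degenerate principal series (nondegenerate-case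
cocycle): supported on the Siegel parabolic, with value `1` at the identity. -/
noncomputable def f0gen {W : Type*} [AddCommGroup W] [Module E W] {G : Type*}
    [Group G] (φ : G →* (W ≃ₗ[E] W)) (Δ : Submodule E W) (χ : E →* k) : G → k :=
  fun g =>
    if h : (∀ x : W, x ∈ Δ ↔ φ g x ∈ Δ) then χ (detRes Δ (φ g) h) else 0

/-- The special section of a degenerate principal series (zero-form-case
cocycle): supported on the Siegel parabolic, with value `1` at the identity. -/
noncomputable def f0genz (σc : E →+* E) {W : Type*} [AddCommGroup W] [Module E W]
    {G : Type*} [Group G] (φ : G →* (W ≃ₗ[E] W)) (Δ : Submodule E W)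
    (χ : E →* k) : G → k :=
  fun g =>
    if h : (∀ x : W, x ∈ Δ ↔ φ g x ∈ Δ) then
      χ (detRes Δ (φ g) h) * (χ (σc (detQuot Δ (φ g) h)))⁻¹
    else 0

/-- The Siegel parabolic subgroup `P^Δ ⊆ Isom(V□)`: the stabilizer of `V^Δ`. -/
noncomputable def siegelSub (B : V → V → E) : Subgroup ↥(IsomGrp (dblForm B)) :=
  Subgroup.comap (IsomGrp (dblForm B)).subtype (stab (diagSub E V))

/-- The diagonal copy of the unipotent radical `N` inside `N × N`. -/
noncomputable def diagN (B : V → V → E) (X S : Submodule E V) (h : X ≤ S) :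
    Subgroup (↥(unipSub B X S h) × ↥(unipSub B X S h)) :=
  ((MonoidHom.id ↥(unipSub B X S h)).prod (MonoidHom.id ↥(unipSub B X S h))).range

/-- The embedding of a pair of elements of `N` into `Isom(V□)`. -/
noncomputable def iPairN (B : V → V → E) (X S : Submodule E V) (h : X ≤ S)
    (p : ↥(unipSub B X S h) × ↥(unipSub B X S h)) : ↥(IsomGrp (dblForm B)) :=
  iHom B ((unipSub B X S h).subtype p.1, (unipSub B X S h).subtype p.2)

/-- The flat operator `♭`: `(♭f)(g)(l) = Σ_{Δ(N)\(N×N)} f(i(u₁,u₂)·l·g)`, the sum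
being taken over (chosen) coset representatives. -/
noncomputable def flatOp (B : V → V → E) (X V₀ Y : Submodule E V)
    (f : ↥(IsomGrp (dblForm B)) → k) (g : ↥(IsomGrp (dblForm B)))
    (l : ↥(leviSub (dblForm B) (X.prod X) (V₀.prod V₀) (Y.prod Y))) : k :=
  ∑ᶠ c : Quotient (QuotientGroup.rightRel
      (diagN B X (X ⊔ V₀) le_sup_left)),
    f (iPairN B X (X ⊔ V₀) le_sup_left (Quotient.out c) *
      ((leviSub (dblForm B) (X.prod X) (V₀.prod V₀) (Y.prod Y)).subtype l) * g)

end Dbl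


namespace Dbl

section Aux

variable {E : Type*} [Field E] {V : Type*} [AddCommGroup V] [Module E V]

lemma aux_stab_iff {W : Type*} [AddCommGroup W] [Module E W] (U : Submodule E W)
    (e : W ≃ₗ[E] W) (h1 : ∀ x ∈ U, e x ∈ U) (h2 : ∀ x ∈ U, e.symm x ∈ U) :
    ∀ x : W, x ∈ U ↔ e x ∈ U := by
  intro x
  refine ⟨h1 x, fun h => ?_⟩
  have := h2 _ h
  rwa [e.symm_apply_apply] at this

lemma aux_key [FiniteDimensional E V] (U : Submodule E V)
    (q : (V × V) ≃ₗ[E] (V × V)) (g : V ≃ₗ[E] V)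
    (hq : ∀ z : V × V, z ∈ U.prod U ↔ q z ∈ U.prod U)
    (hD : ∀ z : V × V, z.1 = z.2 ↔ (q (g z.1, z.2)).1 = (q (g z.1, z.2)).2) :
    ∀ x : V, x ∈ U ↔ g x ∈ U := by
  have claim : ∀ v : V, (q.symm (v, v)).1 = g ((q.symm (v, v)).2) := by
    intro v
    set w := q.symm (v, v) with hw
    have h1 : q (g (g.symm w.1), w.2) = (v, v) := by
      rw [g.apply_symm_apply]
      show q w = _
      rw [hw, q.apply_symm_apply]
    have h2 : g.symm w.1 = w.2 := (hD (g.symm w.1, w.2)).2 (by rw [h1])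
    rw [← h2, g.apply_symm_apply]
  have hmem : ∀ v ∈ U, q.symm (v, v) ∈ U.prod U := by
    intro v hv
    have : q (q.symm (v, v)) ∈ U.prod U := by
      rw [q.apply_symm_apply]; exact ⟨hv, hv⟩
    exact (hq _).2 this
  let T : U →ₗ[E] U :=
    { toFun := fun v => ⟨(q.symm ((v : V), (v : V))).2, (hmem v v.2).2⟩
      map_add' := by
        intro a b
        apply Subtype.ext
        show (q.symm (((a : V) + b, (a : V) + b))).2 = _
        have : (((a : V) + b, (a : V) + b) : V × V)
            = ((a : V), (a : V)) + ((b : V), (b : V)) := rfl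
        rw [this, map_add]
        rfl
      map_smul' := by
        intro c a
        apply Subtype.ext
        show (q.symm ((c • (a : V), c • (a : V)))).2 = _
        have : ((c • (a : V), c • (a : V)) : V × V) = c • ((a : V), (a : V)) := rfl
        rw [this, map_smul]
        rfl }
  have hTinj : Function.Injective T := by
    rw [← LinearMap.ker_eq_bot, LinearMap.ker_eq_bot']
    intro m hm
    have h2 : (q.symm ((m : V), (m : V))).2 = 0 := congrArg Subtype.val hm
    have h1 : (q.symm ((m : V), (m : V))).1 = 0 := by
      rw [claim, h2, map_zero]
    have hz : q.symm ((m : V), (m : V)) = 0 := Prod.ext h1 h2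
    have : (((m : V), (m : V)) : V × V) = 0 := by
      rw [LinearEquiv.symm_apply_eq] at hz
      rw [hz, map_zero]
    exact Subtype.ext (congrArg Prod.fst this)
  have hTsurj : Function.Surjective T := (LinearMap.injective_iff_surjective).1 hTinj
  have hfwd : ∀ x ∈ U, g x ∈ U := by
    intro x hx
    obtain ⟨v, hv⟩ := hTsurj ⟨x, hx⟩
    have h2 : (q.symm ((v : V), (v : V))).2 = x := congrArg Subtype.val hv
    have := claim (v : V)
    rw [h2] at this
    rw [← this]
    exact (hmem v v.2).1
  let G : U →ₗ[E] U :=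
    { toFun := fun u => ⟨g u, hfwd u u.2⟩
      map_add' := by
        intro a b; apply Subtype.ext; show g ((a : V) + b) = _; rw [map_add]; rfl
      map_smul' := by
        intro c a; apply Subtype.ext; show g (c • (a : V)) = _; rw [map_smul]; rfl }
  have hGinj : Function.Injective G := by
    rw [← LinearMap.ker_eq_bot, LinearMap.ker_eq_bot']
    intro m hm
    have h0 : g (m : V) = 0 := congrArg Subtype.val hm
    have : (m : V) = 0 := by
      have := congrArg g.symm h0
      rwa [g.symm_apply_apply, map_zero] at this
    exact Subtype.ext this
  have hGsurj : Function.Surjective G := (LinearMap.injective_iff_surjective).1 hGinj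
  intro x
  refine ⟨hfwd x, fun h => ?_⟩
  obtain ⟨u, hu⟩ := hGsurj ⟨g x, h⟩
  have h1 : g (u : V) = g x := congrArg Subtype.val hu
  have h2 : (u : V) = x := g.injective h1
  rw [← h2]; exact u.2

lemma aux_unip_maps {X S : Submodule E V} (hXS : X ≤ S) {e : V ≃ₗ[E] V}
    (he : e ∈ unipFlag3 X S hXS) : (∀ v ∈ X, e v ∈ X) ∧ (∀ v ∈ S, e v ∈ S) := by
  have hmem : ∀ n, ∀ v ∈ flag3 X S (n + 1), e v - v ∈ flag3 X S n := he
  constructor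
  · intro v hv
    have h0 : e v - v ∈ (⊥ : Submodule E V) := hmem 0 v hv
    have h1 : e v - v = 0 := by simpa using h0
    have h2 : e v = v := by rwa [sub_eq_zero] at h1
    rw [h2]; exact hv
  · intro v hv
    have h1 : e v - v ∈ X := hmem 1 v hv
    have h2 : e v = (e v - v) + v := by abel
    rw [h2]
    exact add_mem (hXS h1) hv

lemma aux_unip_stab {X S : Submodule E V} (hXS : X ≤ S) {e : V ≃ₗ[E] V}
    (he : e ∈ unipFlag3 X S hXS) :
    (∀ x, x ∈ X ↔ e x ∈ X) ∧ (∀ x, x ∈ S ↔ e x ∈ S) := by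
  have hsymm : e.symm ∈ unipFlag3 X S hXS := (unipFlag3 X S hXS).inv_mem he
  have m1 := aux_unip_maps hXS he
  have m2 := aux_unip_maps hXS hsymm
  exact ⟨aux_stab_iff X e m1.1 m2.1, aux_stab_iff S e m1.2 m2.2⟩

lemma aux_prod_stab (e1 e2 : V ≃ₗ[E] V) (U : Submodule E V)
    (h1 : ∀ x, x ∈ U ↔ e1 x ∈ U) (h2 : ∀ x, x ∈ U ↔ e2 x ∈ U) :
    ∀ z : V × V, z ∈ U.prod U ↔ (e1.prodCongr e2) z ∈ U.prod U :=
  fun z => ⟨fun hz => ⟨(h1 z.1).1 hz.1, (h2 z.2).1 hz.2⟩,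
    fun hz => ⟨(h1 z.1).2 hz.1, (h2 z.2).2 hz.2⟩⟩

lemma aux_stab_sup {W : Type*} [AddCommGroup W] [Module E W] (e : W ≃ₗ[E] W)
    (A Bs : Submodule E W)
    (hA : ∀ x, x ∈ A ↔ e x ∈ A) (hB : ∀ x, x ∈ Bs ↔ e x ∈ Bs) :
    ∀ x, x ∈ A ⊔ Bs ↔ e x ∈ A ⊔ Bs := by
  have fwd : ∀ (f : W ≃ₗ[E] W), (∀ x, x ∈ A ↔ f x ∈ A) → (∀ x, x ∈ Bs ↔ f x ∈ Bs) →
      ∀ x ∈ A ⊔ Bs, f x ∈ A ⊔ Bs := by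
    intro f hfA hfB x hx
    obtain ⟨a, ha, b, hb, rfl⟩ := Submodule.mem_sup.mp hx
    rw [map_add]
    exact Submodule.add_mem_sup ((hfA a).1 ha) ((hfB b).1 hb)
  have hA' : ∀ x, x ∈ A ↔ e.symm x ∈ A := by
    intro x
    have := hA (e.symm x)
    rw [e.apply_symm_apply] at this
    exact this.symm
  have hB' : ∀ x, x ∈ Bs ↔ e.symm x ∈ Bs := by
    intro x
    have := hB (e.symm x)
    rw [e.apply_symm_apply] at this
    exact this.symm
  exact aux_stab_iff (A ⊔ Bs) e (fwd e hA hB) (fwd e.symm hA' hB')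

lemma aux_prod_sup (A Bs : Submodule E V) :
    (A ⊔ Bs).prod (A ⊔ Bs) = A.prod A ⊔ Bs.prod Bs := by
  apply le_antisymm
  · intro z hz
    obtain ⟨a1, ha1, b1, hb1, h1⟩ := Submodule.mem_sup.mp hz.1
    obtain ⟨a2, ha2, b2, hb2, h2⟩ := Submodule.mem_sup.mp hz.2
    refine Submodule.mem_sup.mpr ⟨(a1, a2), ⟨ha1, ha2⟩, (b1, b2), ⟨hb1, hb2⟩, ?_⟩
    exact Prod.ext (by rw [← h1]; rfl) (by rw [← h2]; rfl)
  · exact sup_le (Submodule.prod_mono le_sup_left le_sup_left)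
      (Submodule.prod_mono le_sup_right le_sup_right)

end Aux

end Dbl

open Classical

/-- STATEMENT 18: if `(♭f₀)(i(g, id_V)) ≠ 0` then `g ∈ P`. -/
theorem statement18
    {E : Type*} [Field E] [Finite E] (σ : E →+* E) (hinv : ∀ x : E, σ (σ x) = x)
    (ε : E) (hε : ε = 1 ∨ ε = -1) (hεE : σ ≠ RingHom.id E → ε = 1)
    (h2 : (2 : E) ≠ 0)
    {V : Type*} [AddCommGroup V] [Module E V] [FiniteDimensional E V]
    (B : V → V → E) (hB : Dbl.IsSesq σ ε B) (hnd : Dbl.Nondeg B)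
    {k : Type*} [Field k] [IsAlgClosed k] (hq : (Nat.card E : k) ≠ 0)
    (χ : E →* k)
    -- the decomposition V = X ⊕ V₀ ⊕ Y
    (X V₀ Y : Submodule E V)
    (hXiso : Dbl.TotIso B X) (hYiso : Dbl.TotIso B Y)
    (hdual : ∀ ℓ : ↥X →ₗ[E] E, ∃! y : V, y ∈ Y ∧ ∀ x : ↥X, ℓ x = B (x : V) y)
    (hV₀nd : ∀ v ∈ V₀, (∀ w ∈ V₀, B v w = 0) → v = 0)
    (horth : ∀ v ∈ V₀, ∀ u : V, (u ∈ X ∨ u ∈ Y) → B v u = 0)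
    (hdsum : ∀ v : V, ∃! t : ↥X × ↥V₀ × ↥Y,
      (t.1 : V) + (t.2.1 : V) + (t.2.2 : V) = v)
    (g : ↥(Dbl.IsomGrp B))
    (hflat : ∃ l, Dbl.flatOp B X V₀ Y
      (Dbl.f0gen (Dbl.IsomGrp (Dbl.dblForm B)).subtype (Dbl.diagSub E V) χ)
      (Dbl.iHom B (g, 1)) l ≠ 0) :
    g ∈ Dbl.parabSub B X (X ⊔ V₀) := by
  obtain ⟨l, hl⟩ := hflat
  unfold Dbl.flatOp at hl
  have hex : ∃ c : Quotient (QuotientGroup.rightRel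
      (Dbl.diagN B X (X ⊔ V₀) le_sup_left)),
      Dbl.f0gen (Dbl.IsomGrp (Dbl.dblForm B)).subtype (Dbl.diagSub E V) χ
        (Dbl.iPairN B X (X ⊔ V₀) le_sup_left (Quotient.out c) *
          ((Dbl.leviSub (Dbl.dblForm B) (X.prod X) (V₀.prod V₀)
            (Y.prod Y)).subtype l) * Dbl.iHom B (g, 1)) ≠ 0 := by
    by_contra hc
    push_neg at hc
    exact hl (finsum_eq_zero_of_forall_eq_zero hc)
  obtain ⟨c, hc⟩ := hex
  set H := Dbl.iPairN B X (X ⊔ V₀) le_sup_left (Quotient.out c) *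
      ((Dbl.leviSub (Dbl.dblForm B) (X.prod X) (V₀.prod V₀)
        (Y.prod Y)).subtype l) * Dbl.iHom B (g, 1) with hHdef
  have hp : ∀ x : V × V, x ∈ Dbl.diagSub E V ↔
      ((Dbl.IsomGrp (Dbl.dblForm B)).subtype H) x ∈ Dbl.diagSub E V := by
    by_contra hcond
    exact hc (dif_neg hcond)
  -- underlying linear equivalences
  set u := Quotient.out c with hu
  set u1 : V ≃ₗ[E] V := ((u.1 : ↥(Dbl.IsomGrp B)) : V ≃ₗ[E] V) with hu1
  set u2 : V ≃ₗ[E] V := ((u.2 : ↥(Dbl.IsomGrp B)) : V ≃ₗ[E] V) with hu2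
  set Lq : (V × V) ≃ₗ[E] (V × V) :=
    ((l : ↥(Dbl.IsomGrp (Dbl.dblForm B))) : (V × V) ≃ₗ[E] (V × V)) with hLq
  set ge : V ≃ₗ[E] V := ((g : ↥(Dbl.IsomGrp B)) : V ≃ₗ[E] V) with hge
  set q : (V × V) ≃ₗ[E] (V × V) := Lq.trans (u1.prodCongr u2) with hqdef
  have Hcoe : ∀ z : V × V,
      ((Dbl.IsomGrp (Dbl.dblForm B)).subtype H) z = q (ge z.1, z.2) := fun z => rfl
  have hD : ∀ z : V × V, z.1 = z.2 ↔
      (q (ge z.1, z.2)).1 = (q (ge z.1, z.2)).2 := by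
    intro z
    have := hp z
    rw [Hcoe z] at this
    exact this
  -- stabilization properties of q
  have hu1flag : u1 ∈ Dbl.unipFlag3 X (X ⊔ V₀) le_sup_left :=
    Subgroup.mem_comap.mp u.1.2
  have hu2flag : u2 ∈ Dbl.unipFlag3 X (X ⊔ V₀) le_sup_left :=
    Subgroup.mem_comap.mp u.2.2
  have hs1 := Dbl.aux_unip_stab le_sup_left hu1flag
  have hs2 := Dbl.aux_unip_stab le_sup_left hu2flag
  have hLX : ∀ z : V × V, z ∈ X.prod X ↔ Lq z ∈ X.prod X :=
    Dbl.leviSub_stab_fst (Dbl.dblForm B) (X.prod X) (V₀.prod V₀) (Y.prod Y) l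
  have hLV0 : ∀ z : V × V, z ∈ V₀.prod V₀ ↔ Lq z ∈ V₀.prod V₀ :=
    Dbl.leviSub_stab_snd (Dbl.dblForm B) (X.prod X) (V₀.prod V₀) (Y.prod Y) l
  have hLS : ∀ z : V × V, z ∈ (X ⊔ V₀).prod (X ⊔ V₀) ↔
      Lq z ∈ (X ⊔ V₀).prod (X ⊔ V₀) := by
    intro z
    rw [Dbl.aux_prod_sup]
    exact Dbl.aux_stab_sup Lq (X.prod X) (V₀.prod V₀) hLX hLV0 z
  have hqX : ∀ z : V × V, z ∈ X.prod X ↔ q z ∈ X.prod X := by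
    intro z
    rw [hLX z]
    exact Dbl.aux_prod_stab u1 u2 X hs1.1 hs2.1 (Lq z)
  have hqS : ∀ z : V × V, z ∈ (X ⊔ V₀).prod (X ⊔ V₀) ↔
      q z ∈ (X ⊔ V₀).prod (X ⊔ V₀) := by
    intro z
    rw [hLS z]
    exact Dbl.aux_prod_stab u1 u2 (X ⊔ V₀) hs1.2 hs2.2 (Lq z)
  have hgX := Dbl.aux_key X q ge hqX hD
  have hgS := Dbl.aux_key (X ⊔ V₀) q ge hqS hD
  exact Subgroup.mem_comap.mpr (Subgroup.mem_inf.mpr ⟨hgX, hgS⟩)
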